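/- Let A be an m×n complex matrix of rank r with singular value decomposition A = U₁Σ₁V₁*, and B an m×n complex matrix of rank s with singular value decomposition B = Ũ₁Σ̃₁Ṽ₁*, and let E = B − A. Then ‖Ũ₁*U₂‖_F² = ‖EB†‖_F² − ‖AA†EB†‖_F² and ‖Ṽ₂*V₁‖_F² = ‖A†E‖_F² − ‖A†EB†B‖_F². -/

import Mathlib

open Matrix

/-- The square of the Frobenius norm of a complex matrix. -/
noncomputable def frobSq {α β : Type*} [Fintype α] [Fintype β] (M : Matrix α β ℂ) : ℝ :=
  ∑ i, ∑ j, ‖M i j‖ ^ 2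

/-- The spectral norm (ℓ²-operator norm) of a complex matrix. -/
noncomputable def spec {α β : Type*} [Fintype α] [Fintype β] [DecidableEq β]
    (M : Matrix α β ℂ) : ℝ :=
  ‖LinearMap.toContinuousLinearMap (Matrix.toEuclideanLin M)‖

/-- `X` is the Moore–Penrose inverse of `M` (the four Penrose equations). -/
def IsMoorePenrose {α β : Type*} [Fintype α] [Fintype β]
    (M : Matrix α β ℂ) (X : Matrix β α ℂ) : Prop :=
  M * X * M = M ∧ X * M * X = X ∧ (M * X)ᴴ = M * X ∧ (X * M)ᴴ = X * M

/-!
`P = AA†` and `Q = B†B` are orthogonal projections, so by Pythagoras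
`‖EB†‖² - ‖P EB†‖² = ‖(I - P) EB†‖²` and `‖A†E‖² - ‖A†E Q‖² = ‖A†E (I - Q)‖²`.
Since `AA†A = A` and `BB†B = B`, the terms in `A` resp. `B` cancel:
`(I - P) EB† = (I - AA†) BB† = U₂U₂* Ũ₁Ũ₁*` and `A†E (I - Q) = -A†A (I - B†B) = -V₁V₁* Ṽ₂Ṽ₂*`,
and multiplying by matrices with orthonormal columns does not change the Frobenius norm.
-/

section Frobenius

variable {k l p q : Type*} [Fintype k] [Fintype l] [Fintype p] [Fintype q]

lemma frobSq_eq_re_trace (M : Matrix k l ℂ) : frobSq M = (Mᴴ * M).trace.re := by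
  simp only [frobSq, trace, diag, mul_apply, conjTranspose_apply, Complex.re_sum]
  rw [Finset.sum_comm]
  refine Finset.sum_congr rfl fun i _ => Finset.sum_congr rfl fun j _ => ?_
  rw [RCLike.star_def, RCLike.conj_mul]
  norm_cast

lemma frobSq_conjTranspose (M : Matrix k l ℂ) : frobSq Mᴴ = frobSq M := by
  rw [frobSq_eq_re_trace, frobSq_eq_re_trace, conjTranspose_conjTranspose, trace_mul_comm]

lemma frobSq_neg (M : Matrix k l ℂ) : frobSq (-M) = frobSq M := by
  simp only [frobSq, Matrix.neg_apply, norm_neg]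

lemma frobSq_mul_of_conjTranspose_mul_self [DecidableEq k] {U : Matrix p k ℂ}
    (hU : Uᴴ * U = 1) (M : Matrix k l ℂ) : frobSq (U * M) = frobSq M := by
  rw [frobSq_eq_re_trace, frobSq_eq_re_trace, conjTranspose_mul, Matrix.mul_assoc,
    ← Matrix.mul_assoc Uᴴ, hU, Matrix.one_mul]

lemma frobSq_mul_mul_conjTranspose [DecidableEq k] [DecidableEq l] {U : Matrix p k ℂ}
    {W : Matrix q l ℂ} (hU : Uᴴ * U = 1) (hW : Wᴴ * W = 1) (M : Matrix k l ℂ) :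
    frobSq (U * M * Wᴴ) = frobSq M := by
  rw [Matrix.mul_assoc, frobSq_mul_of_conjTranspose_mul_self hU, ← frobSq_conjTranspose,
    conjTranspose_mul, conjTranspose_conjTranspose, frobSq_mul_of_conjTranspose_mul_self hW,
    frobSq_conjTranspose]

lemma frobSq_proj_mul_proj [DecidableEq k] [DecidableEq l] {U : Matrix p k ℂ}
    {W : Matrix p l ℂ} (hU : Uᴴ * U = 1) (hW : Wᴴ * W = 1) :
    frobSq (U * Uᴴ * (W * Wᴴ)) = frobSq (Wᴴ * U) := by
  rw [Matrix.mul_assoc U, ← Matrix.mul_assoc Uᴴ, ← Matrix.mul_assoc,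
    frobSq_mul_mul_conjTranspose hU hW, ← frobSq_conjTranspose, conjTranspose_mul,
    conjTranspose_conjTranspose]

lemma frobSq_sub_proj_mul {P : Matrix k k ℂ} (hP : IsStarProjection P) (M : Matrix k l ℂ) :
    frobSq (M - P * M) = frobSq M - frobSq (P * M) := by
  have hPP : P * P = P := hP.isIdempotentElem
  have hPH : Pᴴ = P := hP.isSelfAdjoint
  have hPM : (P * M)ᴴ * (P * M) = Mᴴ * (P * M) := by
    rw [conjTranspose_mul, hPH, Matrix.mul_assoc, ← Matrix.mul_assoc P, hPP]
  have hPM' : (P * M)ᴴ * M = Mᴴ * (P * M) := by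
    rw [conjTranspose_mul, hPH, Matrix.mul_assoc]
  have hcross : (M - P * M)ᴴ * (M - P * M) = Mᴴ * M - Mᴴ * (P * M) := by
    rw [conjTranspose_sub, Matrix.sub_mul, Matrix.mul_sub, Matrix.mul_sub, hPM, hPM']
    abel
  rw [frobSq_eq_re_trace, frobSq_eq_re_trace, frobSq_eq_re_trace, hPM, hcross, trace_sub,
    Complex.sub_re]

lemma frobSq_sub_mul_proj {Q : Matrix l l ℂ} (hQ : IsStarProjection Q) (M : Matrix k l ℂ) :
    frobSq (M - M * Q) = frobSq M - frobSq (M * Q) := by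
  have hQH : Qᴴ = Q := hQ.isSelfAdjoint
  rw [← frobSq_conjTranspose (M - M * Q), ← frobSq_conjTranspose M,
    ← frobSq_conjTranspose (M * Q), conjTranspose_sub, conjTranspose_mul, hQH]
  exact frobSq_sub_proj_mul hQ Mᴴ

end Frobenius

section Orthonormal

variable {m k l R : Type*} [CommRing R] [StarRing R]

lemma conjTranspose_mul_self_eq_one_of_fromCols [Fintype m] [DecidableEq k] [DecidableEq l]
    {U₁ : Matrix m k R} {U₂ : Matrix m l R}
    (hU : (fromCols U₁ U₂)ᴴ * fromCols U₁ U₂ = 1) : U₁ᴴ * U₁ = 1 ∧ U₂ᴴ * U₂ = 1 := by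
  rw [conjTranspose_fromCols_eq_fromRows_conjTranspose, fromRows_mul_fromCols,
    ← fromBlocks_one] at hU
  obtain ⟨h₁₁, -, -, h₂₂⟩ := fromBlocks_inj.mp hU
  exact ⟨h₁₁, h₂₂⟩

lemma one_sub_mul_conjTranspose_of_fromCols [Fintype k] [Fintype l] [DecidableEq m]
    {U₁ : Matrix m k R} {U₂ : Matrix m l R} (hU : fromCols U₁ U₂ * (fromCols U₁ U₂)ᴴ = 1) :
    1 - U₁ * U₁ᴴ = U₂ * U₂ᴴ := by
  rw [conjTranspose_fromCols_eq_fromRows_conjTranspose, fromCols_mul_fromRows] at hU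
  rw [← hU, add_sub_cancel_left]

end Orthonormal

section SVD

variable {m n k K : Type*} [Fintype n] [Fintype k] [DecidableEq k]

lemma diagonal_mul_diagonal_inv [Field K] {d : k → K} (hd : ∀ i, d i ≠ 0) :
    diagonal d * diagonal (fun i => (d i)⁻¹) = 1 := by
  rw [diagonal_mul_diagonal, ← diagonal_one]
  exact congrArg diagonal (funext fun i => mul_inv_cancel₀ (hd i))

lemma diagonal_inv_mul_diagonal [Field K] {d : k → K} (hd : ∀ i, d i ≠ 0) :
    diagonal (fun i => (d i)⁻¹) * diagonal d = 1 := by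
  rw [diagonal_mul_diagonal, ← diagonal_one]
  exact congrArg diagonal (funext fun i => inv_mul_cancel₀ (hd i))

variable {U : Matrix m k ℂ} {W : Matrix n k ℂ} {D D' : Matrix k k ℂ}

lemma svd_mul_pseudoinverse (hW : Wᴴ * W = 1) (hD : D * D' = 1) :
    U * D * Wᴴ * (W * D' * Uᴴ) = U * Uᴴ := by
  simp only [Matrix.mul_assoc]
  rw [← Matrix.mul_assoc Wᴴ, hW, Matrix.one_mul, ← Matrix.mul_assoc D, hD, Matrix.one_mul]

lemma isMoorePenrose_svd [Fintype m] (hU : Uᴴ * U = 1) (hW : Wᴴ * W = 1) (hD : D * D' = 1)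
    (hD' : D' * D = 1) : IsMoorePenrose (U * D * Wᴴ) (W * D' * Uᴴ) := by
  have hMX := svd_mul_pseudoinverse (U := U) hW hD
  have hXM := svd_mul_pseudoinverse (U := W) hU hD'
  refine ⟨?_, ?_, ?_, ?_⟩
  · rw [hMX]
    simp only [Matrix.mul_assoc]
    rw [← Matrix.mul_assoc Uᴴ U, hU, Matrix.one_mul]
  · rw [hXM]
    simp only [Matrix.mul_assoc]
    rw [← Matrix.mul_assoc Wᴴ W, hW, Matrix.one_mul]
  · rw [hMX, conjTranspose_mul, conjTranspose_conjTranspose]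
  · rw [hXM, conjTranspose_mul, conjTranspose_conjTranspose]

end SVD

section MoorePenrose

variable {m n : Type*} [Fintype m] [Fintype n] {A B : Matrix m n ℂ} {X Y : Matrix n m ℂ}

lemma IsMoorePenrose.isStarProjection_mul_pinv (h : IsMoorePenrose A X) :
    IsStarProjection (A * X) :=
  isStarProjection_iff'.mpr ⟨by rw [← Matrix.mul_assoc, h.1], h.2.2.1⟩

lemma IsMoorePenrose.isStarProjection_pinv_mul (h : IsMoorePenrose A X) :
    IsStarProjection (X * A) :=
  isStarProjection_iff'.mpr ⟨by rw [← Matrix.mul_assoc, h.2.1], h.2.2.2⟩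

lemma sub_mul_sub_proj_mul [DecidableEq m] (hA : A * X * A = A) :
    (B - A) * Y - A * X * ((B - A) * Y) = (1 - A * X) * (B * Y) := by
  rw [Matrix.sub_mul B A, Matrix.mul_sub, ← Matrix.mul_assoc (A * X) A, hA, Matrix.sub_mul,
    Matrix.one_mul, Matrix.mul_assoc]
  abel

lemma mul_sub_sub_mul_proj [DecidableEq n] (hB : B * Y * B = B) :
    X * (B - A) - X * (B - A) * (Y * B) = -(X * A * (1 - Y * B)) := by
  rw [Matrix.mul_sub X B A, Matrix.sub_mul, Matrix.mul_assoc X B, ← Matrix.mul_assoc B,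
    hB, Matrix.mul_sub, Matrix.mul_one]
  abel

end MoorePenrose

theorem stmt17_general {m n r s : ℕ}
    (A B : Matrix (Fin m) (Fin n) ℂ)
    (σ : Fin r → ℝ) (hσpos : ∀ i, 0 < σ i)
    (τ : Fin s → ℝ) (hτpos : ∀ i, 0 < τ i)
    (U₁ : Matrix (Fin m) (Fin r) ℂ) (U₂ : Matrix (Fin m) (Fin (m - r)) ℂ)
    (V₁ : Matrix (Fin n) (Fin r) ℂ) (V₂ : Matrix (Fin n) (Fin (n - r)) ℂ)
    (tU₁ : Matrix (Fin m) (Fin s) ℂ) (tU₂ : Matrix (Fin m) (Fin (m - s)) ℂ)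
    (tV₁ : Matrix (Fin n) (Fin s) ℂ) (tV₂ : Matrix (Fin n) (Fin (n - s)) ℂ)
    (hU : (fromCols U₁ U₂)ᴴ * fromCols U₁ U₂ = 1
        ∧ fromCols U₁ U₂ * (fromCols U₁ U₂)ᴴ = 1)
    (hV : (fromCols V₁ V₂)ᴴ * fromCols V₁ V₂ = 1
        ∧ fromCols V₁ V₂ * (fromCols V₁ V₂)ᴴ = 1)
    (htU : (fromCols tU₁ tU₂)ᴴ * fromCols tU₁ tU₂ = 1
        ∧ fromCols tU₁ tU₂ * (fromCols tU₁ tU₂)ᴴ = 1)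
    (htV : (fromCols tV₁ tV₂)ᴴ * fromCols tV₁ tV₂ = 1
        ∧ fromCols tV₁ tV₂ * (fromCols tV₁ tV₂)ᴴ = 1)
    (hAsvd : A = U₁ * diagonal (fun i => (σ i : ℂ)) * V₁ᴴ)
    (hBsvd : B = tU₁ * diagonal (fun i => (τ i : ℂ)) * tV₁ᴴ)
    (E : Matrix (Fin m) (Fin n) ℂ) (hE : E = B - A)
    (Adag Bdag : Matrix (Fin n) (Fin m) ℂ)
    (hAdag : Adag = V₁ * diagonal (fun i => ((σ i : ℂ))⁻¹) * U₁ᴴ)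
    (hBdag : Bdag = tV₁ * diagonal (fun i => ((τ i : ℂ))⁻¹) * tU₁ᴴ) :
    frobSq (tU₁ᴴ * U₂) = frobSq (E * Bdag) - frobSq (A * Adag * E * Bdag)
    ∧ frobSq (tV₂ᴴ * V₁) = frobSq (Adag * E) - frobSq (Adag * E * Bdag * B) := by
  obtain ⟨hU₁, hU₂⟩ := conjTranspose_mul_self_eq_one_of_fromCols hU.1
  obtain ⟨hV₁, -⟩ := conjTranspose_mul_self_eq_one_of_fromCols hV.1
  obtain ⟨htU₁, -⟩ := conjTranspose_mul_self_eq_one_of_fromCols htU.1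
  obtain ⟨htV₁, htV₂⟩ := conjTranspose_mul_self_eq_one_of_fromCols htV.1
  have hσ : ∀ i, (σ i : ℂ) ≠ 0 := fun i => Complex.ofReal_ne_zero.mpr (hσpos i).ne'
  have hτ : ∀ i, (τ i : ℂ) ≠ 0 := fun i => Complex.ofReal_ne_zero.mpr (hτpos i).ne'
  have hA : IsMoorePenrose A Adag := hAsvd ▸ hAdag ▸ isMoorePenrose_svd hU₁ hV₁
    (diagonal_mul_diagonal_inv hσ) (diagonal_inv_mul_diagonal hσ)
  have hB : IsMoorePenrose B Bdag := hBsvd ▸ hBdag ▸ isMoorePenrose_svd htU₁ htV₁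
    (diagonal_mul_diagonal_inv hτ) (diagonal_inv_mul_diagonal hτ)
  have hAAdag : A * Adag = U₁ * U₁ᴴ :=
    hAsvd ▸ hAdag ▸ svd_mul_pseudoinverse hV₁ (diagonal_mul_diagonal_inv hσ)
  have hAdagA : Adag * A = V₁ * V₁ᴴ :=
    hAsvd ▸ hAdag ▸ svd_mul_pseudoinverse hU₁ (diagonal_inv_mul_diagonal hσ)
  have hBBdag : B * Bdag = tU₁ * tU₁ᴴ :=
    hBsvd ▸ hBdag ▸ svd_mul_pseudoinverse htV₁ (diagonal_mul_diagonal_inv hτ)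
  have hBdagB : Bdag * B = tV₁ * tV₁ᴴ :=
    hBsvd ▸ hBdag ▸ svd_mul_pseudoinverse htU₁ (diagonal_inv_mul_diagonal hτ)
  subst hE
  constructor
  · rw [Matrix.mul_assoc (A * Adag), ← frobSq_sub_proj_mul hA.isStarProjection_mul_pinv,
      sub_mul_sub_proj_mul hA.1, hAAdag, hBBdag, one_sub_mul_conjTranspose_of_fromCols hU.2,
      frobSq_proj_mul_proj hU₂ htU₁]
  · rw [Matrix.mul_assoc (Adag * (B - A)), ← frobSq_sub_mul_proj hB.isStarProjection_pinv_mul,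
      mul_sub_sub_mul_proj hB.1, frobSq_neg, hAdagA, hBdagB,
      one_sub_mul_conjTranspose_of_fromCols htV.2, frobSq_proj_mul_proj hV₁ htV₂]

theorem stmt17 {m n r s : ℕ}
    (A B : Matrix (Fin m) (Fin n) ℂ)
    (hrankA : A.rank = r) (hrankB : B.rank = s)
    (σ : Fin r → ℝ) (hσmono : Antitone σ) (hσpos : ∀ i, 0 < σ i)
    (τ : Fin s → ℝ) (hτmono : Antitone τ) (hτpos : ∀ i, 0 < τ i)
    (U₁ : Matrix (Fin m) (Fin r) ℂ) (U₂ : Matrix (Fin m) (Fin (m - r)) ℂ)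
    (V₁ : Matrix (Fin n) (Fin r) ℂ) (V₂ : Matrix (Fin n) (Fin (n - r)) ℂ)
    (tU₁ : Matrix (Fin m) (Fin s) ℂ) (tU₂ : Matrix (Fin m) (Fin (m - s)) ℂ)
    (tV₁ : Matrix (Fin n) (Fin s) ℂ) (tV₂ : Matrix (Fin n) (Fin (n - s)) ℂ)
    (hU : (fromCols U₁ U₂)ᴴ * fromCols U₁ U₂ = 1
        ∧ fromCols U₁ U₂ * (fromCols U₁ U₂)ᴴ = 1)
    (hV : (fromCols V₁ V₂)ᴴ * fromCols V₁ V₂ = 1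
        ∧ fromCols V₁ V₂ * (fromCols V₁ V₂)ᴴ = 1)
    (htU : (fromCols tU₁ tU₂)ᴴ * fromCols tU₁ tU₂ = 1
        ∧ fromCols tU₁ tU₂ * (fromCols tU₁ tU₂)ᴴ = 1)
    (htV : (fromCols tV₁ tV₂)ᴴ * fromCols tV₁ tV₂ = 1
        ∧ fromCols tV₁ tV₂ * (fromCols tV₁ tV₂)ᴴ = 1)
    (hAsvd : A = U₁ * diagonal (fun i => (σ i : ℂ)) * V₁ᴴ)
    (hBsvd : B = tU₁ * diagonal (fun i => (τ i : ℂ)) * tV₁ᴴ)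
    (E : Matrix (Fin m) (Fin n) ℂ) (hE : E = B - A)
    (Adag Bdag : Matrix (Fin n) (Fin m) ℂ)
    (hAdag : Adag = V₁ * diagonal (fun i => ((σ i : ℂ))⁻¹) * U₁ᴴ)
    (hBdag : Bdag = tV₁ * diagonal (fun i => ((τ i : ℂ))⁻¹) * tU₁ᴴ) :
    frobSq (tU₁ᴴ * U₂) = frobSq (E * Bdag) - frobSq (A * Adag * E * Bdag)
    ∧ frobSq (tV₂ᴴ * V₁) = frobSq (Adag * E) - frobSq (Adag * E * Bdag * B) :=
  stmt17_general A B σ hσpos τ hτpos U₁ U₂ V₁ V₂ tU₁ tU₂ tV₁ tV₂ hU hV htU htV hAsvd hBsvd E hE Adag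
    Bdag hAdag hBdag
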